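/- Let X₁,…,X_n, Y₁,…,Y_n be independent real-valued random variables, p ≥ 1 an integer, V(x) = 1 + |x|^p, and A_n = max_{1≤i≤n} (E V(X_i) ∨ E V(Y_i)) < ∞. Then sup over measurable f with |f| ≤ V of |E f(X₁+⋯+X_n) − E f(Y₁+⋯+Y_n)| is at most 2^{p+1} n^{p+1} A_n max_{1≤i≤n} ‖P_{X_i} − P_{Y_i}‖_V. -/

import Mathlib

/-!
Lindeberg's replacement trick: swap `Y_k` for `X_k` one index at a time. With `T` the sum of
the other `n - 1` summands, independent of `X_k` and `Y_k`, one swap changes `E f(·)` by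
`∫ (∫ f(a + b) d(P_{X_k} - P_{Y_k})(b)) dP_T(a)`. Since `V(a + b) ≤ 2^p V(a) V(b)`, the function
`b ↦ f(a + b) / (2^p V(a))` is dominated by `V`, so the inner integral is at most
`2^p V(a) ‖P_{X_k} - P_{Y_k}‖_V`, and `E V(T) ≤ n^p A_n` by the power-mean inequality.
-/

open MeasureTheory ProbabilityTheory Filter Set
open scoped ENNReal NNReal

noncomputable section

/-- `V`-norm distance `‖μ − ν‖_V = sup{|∫ f dμ − ∫ f dν| : f measurable, |f| ≤ V}`. -/
noncomputable def vDist {E : Type*} [MeasurableSpace E] (V : E → ℝ) (μ ν : Measure E) : ℝ :=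
  ⨆ f : {f : E → ℝ // Measurable f ∧ ∀ x, |f x| ≤ V x},
    |(∫ x, f.1 x ∂μ) - ∫ x, f.1 x ∂ν|

section VDist

variable {E : Type*} [MeasurableSpace E] {V : E → ℝ} {μ ν : Measure E}

lemma bddAbove_range_abs_integral_sub (hμ : Integrable V μ) (hν : Integrable V ν) :
    BddAbove (range fun f : {f : E → ℝ // Measurable f ∧ ∀ x, |f x| ≤ V x} =>
      |(∫ x, f.1 x ∂μ) - ∫ x, f.1 x ∂ν|) := by
  refine ⟨(∫ x, V x ∂μ) + ∫ x, V x ∂ν, ?_⟩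
  rintro _ ⟨⟨f, -, hfV⟩, rfl⟩
  have hbound (κ : Measure E) (hκ : Integrable V κ) : |∫ x, f x ∂κ| ≤ ∫ x, V x ∂κ :=
    norm_integral_le_of_norm_le (f := f) hκ (.of_forall hfV)
  exact (abs_sub _ _).trans (add_le_add (hbound μ hμ) (hbound ν hν))

lemma abs_integral_sub_le_vDist (hμ : Integrable V μ) (hν : Integrable V ν) {f : E → ℝ}
    (hf : Measurable f) (hfV : ∀ x, |f x| ≤ V x) :
    |(∫ x, f x ∂μ) - ∫ x, f x ∂ν| ≤ vDist V μ ν :=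
  le_ciSup (bddAbove_range_abs_integral_sub hμ hν) ⟨f, hf, hfV⟩

lemma vDist_nonneg : 0 ≤ vDist V μ ν :=
  Real.iSup_nonneg fun _ => abs_nonneg _

lemma vDist_le_of_forall (hV : ∀ x, 0 ≤ V x) {c : ℝ}
    (h : ∀ f : E → ℝ, Measurable f → (∀ x, |f x| ≤ V x) →
      |(∫ x, f x ∂μ) - ∫ x, f x ∂ν| ≤ c) :
    vDist V μ ν ≤ c :=
  have : Nonempty {f : E → ℝ // Measurable f ∧ ∀ x, |f x| ≤ V x} :=
    ⟨⟨0, measurable_const, fun x => by simpa using hV x⟩⟩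
  ciSup_le fun f => h f.1 f.2.1 f.2.2

end VDist

lemma one_add_abs_add_pow_le (p : ℕ) (a b : ℝ) :
    1 + |a + b| ^ p ≤ 2 ^ p * ((1 + |a| ^ p) * (1 + |b| ^ p)) := by
  have hsum : |a + b| ^ p ≤ 2 ^ p * (|a| ^ p + |b| ^ p) :=
    calc |a + b| ^ p ≤ (|a| + |b|) ^ p := by gcongr; exact abs_add_le a b
      _ ≤ 2 ^ (p - 1) * (|a| ^ p + |b| ^ p) := add_pow_le (abs_nonneg a) (abs_nonneg b) p
      _ ≤ 2 ^ p * (|a| ^ p + |b| ^ p) := by gcongr; exacts [one_le_two, p.sub_le 1]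
  have h2p : (1 : ℝ) ≤ 2 ^ p := one_le_pow₀ one_le_two
  nlinarith [mul_nonneg (pow_nonneg (abs_nonneg a) p) (pow_nonneg (abs_nonneg b) p)]

lemma abs_sum_pow_le {ι : Type*} (s : Finset ι) (z : ι → ℝ) {p : ℕ} (hp : 1 ≤ p) :
    |∑ i ∈ s, z i| ^ p ≤ (s.card : ℝ) ^ (p - 1) * ∑ i ∈ s, |z i| ^ p := by
  obtain ⟨q, rfl⟩ := Nat.exists_eq_add_of_le' hp
  calc |∑ i ∈ s, z i| ^ (q + 1) ≤ (∑ i ∈ s, |z i|) ^ (q + 1) := by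
        gcongr; exact Finset.abs_sum_le_sum_abs _ _
    _ ≤ _ := pow_sum_le_card_mul_sum_pow (fun i _ => abs_nonneg (z i)) q

section Convolution

variable {p : ℕ} {f : ℝ → ℝ} {ρ μ ν : Measure ℝ}

lemma integrable_comp_add_prod (hρ : Integrable (fun x => 1 + |x| ^ p) ρ)
    (hμ : Integrable (fun x => 1 + |x| ^ p) μ) (hf : Measurable f)
    (hfV : ∀ x, |f x| ≤ 1 + |x| ^ p) :
    Integrable (fun q : ℝ × ℝ => f (q.1 + q.2)) (ρ.prod μ) :=
  ((hρ.mul_prod hμ).const_mul (2 ^ p)).mono' (hf.comp measurable_add).aestronglyMeasurable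
    (.of_forall fun q => (hfV _).trans (one_add_abs_add_pow_le p q.1 q.2))

lemma abs_integral_comp_add_sub_le (hμ : Integrable (fun x => 1 + |x| ^ p) μ)
    (hν : Integrable (fun x => 1 + |x| ^ p) ν) (hf : Measurable f)
    (hfV : ∀ x, |f x| ≤ 1 + |x| ^ p) (a : ℝ) :
    |(∫ b, f (a + b) ∂μ) - ∫ b, f (a + b) ∂ν|
      ≤ 2 ^ p * (1 + |a| ^ p) * vDist (fun x => 1 + |x| ^ p) μ ν := by
  set c : ℝ := 2 ^ p * (1 + |a| ^ p)
  have hc : 0 < c := by positivity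
  have hscaled : ∀ b, |c⁻¹ * f (a + b)| ≤ 1 + |b| ^ p := fun b => by
    rw [abs_mul, abs_of_pos (inv_pos.2 hc), inv_mul_le_iff₀ hc]
    exact (hfV _).trans ((one_add_abs_add_pow_le p a b).trans_eq (by ring))
  have h := abs_integral_sub_le_vDist hμ hν (by fun_prop) hscaled
  rwa [integral_const_mul, integral_const_mul, ← mul_sub, abs_mul, abs_of_pos (inv_pos.2 hc),
    inv_mul_le_iff₀ hc] at h

lemma abs_integral_conv_sub_le [SFinite ρ] [SFinite μ] [SFinite ν]
    (hρ : Integrable (fun x => 1 + |x| ^ p) ρ) (hμ : Integrable (fun x => 1 + |x| ^ p) μ)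
    (hν : Integrable (fun x => 1 + |x| ^ p) ν) (hf : Measurable f)
    (hfV : ∀ x, |f x| ≤ 1 + |x| ^ p) :
    |(∫ x, f x ∂(ρ ∗ μ)) - ∫ x, f x ∂(ρ ∗ ν)|
      ≤ 2 ^ p * (∫ x, 1 + |x| ^ p ∂ρ) * vDist (fun x => 1 + |x| ^ p) μ ν := by
  have hμ' := integrable_comp_add_prod hρ hμ hf hfV
  have hν' := integrable_comp_add_prod hρ hν hf hfV
  rw [Measure.conv, Measure.conv, integral_map (by fun_prop) hf.aestronglyMeasurable,
    integral_map (by fun_prop) hf.aestronglyMeasurable, integral_prod _ hμ', integral_prod _ hν',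
    ← integral_sub hμ'.integral_prod_left hν'.integral_prod_left]
  refine (norm_integral_le_of_norm_le (f := fun a => (∫ b, f (a + b) ∂μ) - ∫ b, f (a + b) ∂ν)
    ((hρ.const_mul _).mul_const _)
    (.of_forall fun a => abs_integral_comp_add_sub_le hμ hν hf hfV a)).trans_eq ?_
  rw [integral_mul_const, integral_const_mul]

end Convolution

section Independence

variable {Ω : Type*} [MeasurableSpace Ω] {P : Measure Ω} {p : ℕ}

lemma abs_integral_add_sub_le [IsFiniteMeasure P] {f : ℝ → ℝ} {T U W : Ω → ℝ}
    (hT : Measurable T) (hU : Measurable U) (hW : Measurable W)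
    (hTU : IndepFun T U P) (hTW : IndepFun T W P)
    (hTint : Integrable (fun ω => 1 + |T ω| ^ p) P) (hUint : Integrable (fun ω => 1 + |U ω| ^ p) P)
    (hWint : Integrable (fun ω => 1 + |W ω| ^ p) P) (hf : Measurable f)
    (hfV : ∀ x, |f x| ≤ 1 + |x| ^ p) :
    |(∫ ω, f (T ω + U ω) ∂P) - ∫ ω, f (T ω + W ω) ∂P|
      ≤ 2 ^ p * (∫ ω, 1 + |T ω| ^ p ∂P) *
          vDist (fun x => 1 + |x| ^ p) (P.map U) (P.map W) := by
  have hV : Measurable fun x : ℝ => 1 + |x| ^ p := by fun_prop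
  have hmap {Z : Ω → ℝ} (hZ : Measurable Z) (h : Integrable (fun ω => 1 + |Z ω| ^ p) P) :
      Integrable (fun x => 1 + |x| ^ p) (P.map Z) :=
    (integrable_map_measure hV.aestronglyMeasurable hZ.aemeasurable).2 h
  have hlaw {Z : Ω → ℝ} (hZ : Measurable Z) (hTZ : IndepFun T Z P) :
      ∫ ω, f (T ω + Z ω) ∂P = ∫ x, f x ∂(P.map T ∗ P.map Z) := by
    rw [← hTZ.map_add_eq_map_conv_map hT hZ,
      integral_map (hT.add hZ).aemeasurable hf.aestronglyMeasurable]
    rfl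
  rw [hlaw hU hTU, hlaw hW hTW,
    ← integral_map hT.aemeasurable (f := fun x => 1 + |x| ^ p) hV.aestronglyMeasurable]
  exact abs_integral_conv_sub_le (hmap hT hTint) (hmap hU hUint) (hmap hW hWint) hf hfV

variable {ι : Type*} {Z : ι → Ω → ℝ}

lemma integral_one_add [IsProbabilityMeasure P] {g : Ω → ℝ} (hg : Integrable g P) :
    ∫ ω, 1 + g ω ∂P = 1 + ∫ ω, g ω ∂P := by
  simp [integral_add (integrable_const 1) hg]

lemma integrable_abs_sum_pow (hp : 1 ≤ p) (s : Finset ι) (hZm : ∀ j, Measurable (Z j))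
    (hZ : ∀ j ∈ s, Integrable (fun ω => |Z j ω| ^ p) P) :
    Integrable (fun ω => |∑ j ∈ s, Z j ω| ^ p) P :=
  ((integrable_finsetSum s hZ).const_mul _).mono' (by fun_prop)
    (.of_forall fun ω => by
      rw [Real.norm_eq_abs, abs_of_nonneg (by positivity)]
      exact abs_sum_pow_le s (Z · ω) hp)

lemma integral_abs_sum_pow_le (hp : 1 ≤ p) (s : Finset ι) {M : ℝ}
    (hZ : ∀ j ∈ s, Integrable (fun ω => |Z j ω| ^ p) P)
    (hM : ∀ j ∈ s, ∫ ω, |Z j ω| ^ p ∂P ≤ M) :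
    ∫ ω, |∑ j ∈ s, Z j ω| ^ p ∂P ≤ (s.card : ℝ) ^ p * M := by
  calc ∫ ω, |∑ j ∈ s, Z j ω| ^ p ∂P
      ≤ ∫ ω, (s.card : ℝ) ^ (p - 1) * ∑ j ∈ s, |Z j ω| ^ p ∂P :=
        integral_mono_of_nonneg (.of_forall fun ω => by positivity)
          ((integrable_finsetSum s hZ).const_mul _)
          (.of_forall fun ω => abs_sum_pow_le s (Z · ω) hp)
    _ ≤ (s.card : ℝ) ^ (p - 1) * (s.card * M) := by
        rw [integral_const_mul, integral_finsetSum s hZ]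
        gcongr
        simpa using Finset.sum_le_card_nsmul s _ M hM
    _ = (s.card : ℝ) ^ p * M := by
        rw [← mul_assoc, ← pow_succ, Nat.sub_add_cancel hp]

lemma integrable_one_add_abs_sum_pow [IsFiniteMeasure P] (hp : 1 ≤ p) (s : Finset ι)
    (hZm : ∀ j, Measurable (Z j)) (hZ : ∀ j ∈ s, Integrable (fun ω => 1 + |Z j ω| ^ p) P) :
    Integrable (fun ω => 1 + |∑ j ∈ s, Z j ω| ^ p) P :=
  integrable_const_add_iff.2 <|
    integrable_abs_sum_pow hp s hZm fun j hj => integrable_const_add_iff.1 (hZ j hj)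

lemma integral_one_add_abs_sum_pow_le [IsProbabilityMeasure P] (hp : 1 ≤ p) (s : Finset ι)
    (hZm : ∀ j, Measurable (Z j)) {N : ℕ} (hN : 1 ≤ N) (hsN : s.card ≤ N) {A : ℝ} (hA : 1 ≤ A)
    (hZ : ∀ j ∈ s, Integrable (fun ω => 1 + |Z j ω| ^ p) P)
    (hZA : ∀ j ∈ s, ∫ ω, 1 + |Z j ω| ^ p ∂P ≤ A) :
    ∫ ω, 1 + |∑ j ∈ s, Z j ω| ^ p ∂P ≤ (N : ℝ) ^ p * A := by
  have hZpow (j : ι) (hj : j ∈ s) := integrable_const_add_iff.1 (hZ j hj)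
  have hmoment := integral_abs_sum_pow_le hp s hZpow (M := A - 1) fun j hj => by
    linarith [hZA j hj, integral_one_add (hZpow j hj)]
  have hN1 : (1 : ℝ) ≤ (N : ℝ) ^ p := one_le_pow₀ (by exact_mod_cast hN)
  have hsN' : (s.card : ℝ) ^ p ≤ (N : ℝ) ^ p := by gcongr
  rw [integral_one_add (integrable_abs_sum_pow hp s hZm hZpow)]
  nlinarith

end Independence

section Hybrid

variable {Ω ι : Type*} [Fintype ι] [DecidableEq ι] {X Y : ι → Ω → ℝ}

def hybridSum (X Y : ι → Ω → ℝ) (s : Finset ι) (ω : Ω) : ℝ :=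
  ∑ i ∈ s, X i ω + ∑ i ∈ sᶜ, Y i ω

lemma hybridSum_insert {a : ι} {s : Finset ι} (ha : a ∉ s) (ω : Ω) :
    hybridSum X Y (insert a s) ω
      = ∑ j ∈ s.disjSum (insert a s)ᶜ, Sum.elim X Y j ω + X a ω := by
  rw [hybridSum, Finset.sum_disjSum, Finset.sum_insert ha]
  simp only [Sum.elim_inl, Sum.elim_inr]
  ring

lemma hybridSum_of_notMem {a : ι} {s : Finset ι} (ha : a ∉ s) (ω : Ω) :
    hybridSum X Y s ω = ∑ j ∈ s.disjSum (insert a s)ᶜ, Sum.elim X Y j ω + Y a ω := by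
  rw [hybridSum, Finset.sum_disjSum, ← Finset.insert_compl_insert ha,
    Finset.sum_insert (by simp)]
  simp only [Sum.elim_inl, Sum.elim_inr]
  ring

variable [MeasurableSpace Ω] {P : Measure Ω} [IsProbabilityMeasure P] {p : ℕ} {f : ℝ → ℝ}
  {A D : ℝ}

lemma abs_integral_hybridSum_insert_sub_le (hp : 1 ≤ p)
    (hX : ∀ i, Measurable (X i)) (hY : ∀ i, Measurable (Y i)) (hindep : iIndepFun (Sum.elim X Y) P)
    (hXint : ∀ i, Integrable (fun ω => 1 + |X i ω| ^ p) P)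
    (hYint : ∀ i, Integrable (fun ω => 1 + |Y i ω| ^ p) P)
    (hXA : ∀ i, ∫ ω, 1 + |X i ω| ^ p ∂P ≤ A) (hYA : ∀ i, ∫ ω, 1 + |Y i ω| ^ p ∂P ≤ A)
    (hD : ∀ i, vDist (fun x => 1 + |x| ^ p) (P.map (X i)) (P.map (Y i)) ≤ D)
    (hf : Measurable f) (hfV : ∀ x, |f x| ≤ 1 + |x| ^ p) {a : ι} {s : Finset ι} (ha : a ∉ s) :
    |(∫ ω, f (hybridSum X Y (insert a s) ω) ∂P) - ∫ ω, f (hybridSum X Y s ω) ∂P|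
      ≤ 2 ^ p * ((Fintype.card ι : ℝ) ^ p * A) * D := by
  set Z := Sum.elim X Y
  set S := s.disjSum (insert a s)ᶜ
  set T : Ω → ℝ := fun ω => ∑ j ∈ S, Z j ω
  have hZ : ∀ j, Measurable (Z j) := Sum.forall.2 ⟨hX, hY⟩
  have hZint : ∀ j, Integrable (fun ω => 1 + |Z j ω| ^ p) P := Sum.forall.2 ⟨hXint, hYint⟩
  have hZA : ∀ j, ∫ ω, 1 + |Z j ω| ^ p ∂P ≤ A := Sum.forall.2 ⟨hXA, hYA⟩
  have hA : 1 ≤ A := by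
    have hXa := integrable_const_add_iff.1 (hXint a)
    have hmoment : 0 ≤ ∫ ω, |X a ω| ^ p ∂P := integral_nonneg fun ω => by positivity
    linarith [hXA a, integral_one_add hXa]
  have hTind (j : ι ⊕ ι) (hj : j ∉ S) : IndepFun T (Z j) P := by
    simpa [T, Finset.sum_fn] using hindep.indepFun_finsetSum_of_notMem hZ hj
  have hSN : S.card ≤ Fintype.card ι := by
    simp only [S, Finset.card_disjSum, Finset.card_compl, Finset.card_insert_of_notMem ha]
    have := Finset.card_le_univ s
    omega
  have hTmoment := integral_one_add_abs_sum_pow_le hp S hZ (Fintype.card_pos_iff.2 ⟨a⟩) hSN hA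
    (fun j _ => hZint j) (fun j _ => hZA j)
  have hswap := abs_integral_add_sub_le (Finset.measurable_sum S fun j _ => hZ j) (hX a) (hY a)
    (hTind (.inl a) (by simp [S, ha])) (hTind (.inr a) (by simp [S]))
    (integrable_one_add_abs_sum_pow hp S hZ fun j _ => hZint j) (hXint a) (hYint a) hf hfV
  simp only [hybridSum_insert ha, hybridSum_of_notMem ha]
  exact hswap.trans (mul_le_mul (mul_le_mul_of_nonneg_left hTmoment (by positivity)) (hD a)
    vDist_nonneg (mul_nonneg (by positivity) (mul_nonneg (by positivity) (by linarith))))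

lemma abs_integral_sum_sub_le (hp : 1 ≤ p)
    (hX : ∀ i, Measurable (X i)) (hY : ∀ i, Measurable (Y i)) (hindep : iIndepFun (Sum.elim X Y) P)
    (hXint : ∀ i, Integrable (fun ω => 1 + |X i ω| ^ p) P)
    (hYint : ∀ i, Integrable (fun ω => 1 + |Y i ω| ^ p) P)
    (hXA : ∀ i, ∫ ω, 1 + |X i ω| ^ p ∂P ≤ A) (hYA : ∀ i, ∫ ω, 1 + |Y i ω| ^ p ∂P ≤ A)
    (hD : ∀ i, vDist (fun x => 1 + |x| ^ p) (P.map (X i)) (P.map (Y i)) ≤ D)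
    (hf : Measurable f) (hfV : ∀ x, |f x| ≤ 1 + |x| ^ p) :
    |(∫ ω, f (∑ i, X i ω) ∂P) - ∫ ω, f (∑ i, Y i ω) ∂P|
      ≤ 2 ^ p * (Fintype.card ι : ℝ) ^ (p + 1) * A * D := by
  set C := 2 ^ p * ((Fintype.card ι : ℝ) ^ p * A) * D
  have htelescope (s : Finset ι) :
      |(∫ ω, f (hybridSum X Y s ω) ∂P) - ∫ ω, f (hybridSum X Y ∅ ω) ∂P| ≤ s.card * C := by
    induction s using Finset.induction_on with
    | empty => simp
    | insert a s ha ih =>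
      calc _ ≤ |(∫ ω, f (hybridSum X Y (insert a s) ω) ∂P) - ∫ ω, f (hybridSum X Y s ω) ∂P|
            + |(∫ ω, f (hybridSum X Y s ω) ∂P) - ∫ ω, f (hybridSum X Y ∅ ω) ∂P| :=
            abs_sub_le _ _ _
        _ ≤ C + s.card * C := add_le_add (abs_integral_hybridSum_insert_sub_le hp hX hY hindep
            hXint hYint hXA hYA hD hf hfV ha) ih
        _ = (insert a s).card * C := by
            rw [Finset.card_insert_of_notMem ha]; push_cast; ring
  convert htelescope Finset.univ using 1
  · simp [hybridSum]
  · rw [Finset.card_univ]; ring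

end Hybrid

theorem statement19_general
    {Ω : Type*} [MeasurableSpace Ω] (P : Measure Ω) [IsProbabilityMeasure P]
    (n : ℕ) (p : ℕ) (hp : 1 ≤ p)
    (X Y : Fin n → Ω → ℝ)
    (hXmeas : ∀ i, Measurable (X i)) (hYmeas : ∀ i, Measurable (Y i))
    -- X₁,…,X_n, Y₁,…,Y_n are (jointly) independent
    (hindep : iIndepFun (Sum.elim X Y) P)
    -- integrability: A_n < ∞
    (hXint : ∀ i, Integrable (fun ω => 1 + |X i ω| ^ p) P)
    (hYint : ∀ i, Integrable (fun ω => 1 + |Y i ω| ^ p) P) :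
    let V : ℝ → ℝ := fun x => 1 + |x| ^ p
    let An : ℝ := ⨆ i : Fin n,
      max (∫ ω, (1 + |X i ω| ^ p) ∂P) (∫ ω, (1 + |Y i ω| ^ p) ∂P)
    vDist V (P.map (fun ω => ∑ i, X i ω)) (P.map (fun ω => ∑ i, Y i ω))
      ≤ 2 ^ (p+1) * (n:ℝ) ^ (p+1) * An *
          ⨆ i : Fin n, vDist V (P.map (X i)) (P.map (Y i)) := by
  intro V An
  set D := ⨆ i : Fin n, vDist V (P.map (X i)) (P.map (Y i))
  have hmax (i : Fin n) :
      max (∫ ω, 1 + |X i ω| ^ p ∂P) (∫ ω, 1 + |Y i ω| ^ p ∂P) ≤ An :=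
    le_ciSup (f := fun i => max (∫ ω, 1 + |X i ω| ^ p ∂P) (∫ ω, 1 + |Y i ω| ^ p ∂P))
      (finite_range _).bddAbove i
  have hXA (i : Fin n) := (le_max_left _ _).trans (hmax i)
  have hYA (i : Fin n) := (le_max_right _ _).trans (hmax i)
  have hD (i : Fin n) : vDist V (P.map (X i)) (P.map (Y i)) ≤ D :=
    le_ciSup (f := fun i => vDist V (P.map (X i)) (P.map (Y i))) (finite_range _).bddAbove i
  have hAn : 0 ≤ An :=
    Real.iSup_nonneg fun i => (integral_nonneg fun ω => by positivity).trans (le_max_left _ _)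
  have hD0 : 0 ≤ D := Real.iSup_nonneg fun _ => vDist_nonneg
  refine vDist_le_of_forall (fun x => by positivity) fun f hf hfV => ?_
  rw [integral_map (by fun_prop) hf.aestronglyMeasurable,
    integral_map (by fun_prop) hf.aestronglyMeasurable]
  calc _ ≤ 2 ^ p * (n : ℝ) ^ (p + 1) * An * D := by
        simpa using abs_integral_sum_sub_le hp hXmeas hYmeas hindep hXint hYint hXA hYA hD hf hfV
    _ ≤ 2 ^ (p + 1) * (n : ℝ) ^ (p + 1) * An * D := by gcongr <;> norm_num

theorem statement19
    {Ω : Type*} [MeasurableSpace Ω] (P : Measure Ω) [IsProbabilityMeasure P]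
    (n : ℕ) (hn : 1 ≤ n) (p : ℕ) (hp : 1 ≤ p)
    (X Y : Fin n → Ω → ℝ)
    (hXmeas : ∀ i, Measurable (X i)) (hYmeas : ∀ i, Measurable (Y i))
    -- X₁,…,X_n, Y₁,…,Y_n are (jointly) independent
    (hindep : iIndepFun (Sum.elim X Y) P)
    -- integrability: A_n < ∞
    (hXint : ∀ i, Integrable (fun ω => 1 + |X i ω| ^ p) P)
    (hYint : ∀ i, Integrable (fun ω => 1 + |Y i ω| ^ p) P) :
    let V : ℝ → ℝ := fun x => 1 + |x| ^ p
    let An : ℝ := ⨆ i : Fin n,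
      max (∫ ω, (1 + |X i ω| ^ p) ∂P) (∫ ω, (1 + |Y i ω| ^ p) ∂P)
    vDist V (P.map (fun ω => ∑ i, X i ω)) (P.map (fun ω => ∑ i, Y i ω))
      ≤ 2 ^ (p+1) * (n:ℝ) ^ (p+1) * An *
          ⨆ i : Fin n, vDist V (P.map (X i)) (P.map (Y i)) :=
  statement19_general P n p hp X Y hXmeas hYmeas hindep hXint hYint

end
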